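/- arXiv:2402.09754 — 2 statements merged into one kernel-verified Lean document; each statement's English description precedes it below -/
import Mathlib

section
/- Let X be any n×p real matrix and let R satisfy 1 ≤ R ≤ min(n,p) and R < n. For the left singular subspace function U_R of the standard SVD (with any fixed selection of singular vectors when they are not unique), there exists k ≤ R+1 such that (k,1) ∈ BP(U_R;X). In particular, bp_row(U_R;X) ≤ R+1 and bp_col(U_R;X) = 1. -/
noncomputable section
open scoped BigOperators
open Matrix

abbrev E (k : ℕ) := EuclideanSpace ℝ (Fin k)

noncomputable def canonAngle {k : ℕ} (V W : Submodule ℝ (E k)) : ℝ :=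
  Real.arccos (sInf {r : ℝ | ∃ w ∈ W, ‖w‖ = 1 ∧
    r = ‖(Submodule.orthogonalProjection V w : E k)‖})

variable {n p m : ℕ}

def BlockCorrupt (X Z : Matrix (Fin n) (Fin p) ℝ) (k l : ℕ) : Prop :=
  ∃ (I : Finset (Fin n)) (J : Finset (Fin p)), I.card = k ∧ J.card = l ∧
    ∀ i j, (i ∉ I ∨ j ∉ J) → Z i j = X i j

def RowCorrupt (X Z : Matrix (Fin n) (Fin p) ℝ) (k : ℕ) : Prop :=
  ∃ I : Finset (Fin n), I.card = k ∧ ∀ i ∉ I, ∀ j, Z i j = X i j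

def ColCorrupt (X Z : Matrix (Fin n) (Fin p) ℝ) (l : ℕ) : Prop :=
  ∃ J : Finset (Fin p), J.card = l ∧ ∀ j ∉ J, ∀ i, Z i j = X i j

def BreaksDownBlock (V : Matrix (Fin n) (Fin p) ℝ → Submodule ℝ (E m))
    (X : Matrix (Fin n) (Fin p) ℝ) (k l : ℕ) : Prop :=
  sSup {d : ℝ | ∃ Z, BlockCorrupt X Z k l ∧ d = canonAngle (V Z) (V X)} = Real.pi / 2

def BreaksDownRow (V : Matrix (Fin n) (Fin p) ℝ → Submodule ℝ (E m))
    (X : Matrix (Fin n) (Fin p) ℝ) (k : ℕ) : Prop :=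
  sSup {d : ℝ | ∃ Z, RowCorrupt X Z k ∧ d = canonAngle (V Z) (V X)} = Real.pi / 2

def BreaksDownCol (V : Matrix (Fin n) (Fin p) ℝ → Submodule ℝ (E m))
    (X : Matrix (Fin n) (Fin p) ℝ) (l : ℕ) : Prop :=
  sSup {d : ℝ | ∃ Z, ColCorrupt X Z l ∧ d = canonAngle (V Z) (V X)} = Real.pi / 2

noncomputable def bpRow (V : Matrix (Fin n) (Fin p) ℝ → Submodule ℝ (E m))
    (X : Matrix (Fin n) (Fin p) ℝ) : ℕ :=
  sInf {k : ℕ | 1 ≤ k ∧ k ≤ n ∧ BreaksDownRow V X k}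

noncomputable def bpCol (V : Matrix (Fin n) (Fin p) ℝ → Submodule ℝ (E m))
    (X : Matrix (Fin n) (Fin p) ℝ) : ℕ :=
  sInf {l : ℕ | 1 ≤ l ∧ l ≤ p ∧ BreaksDownCol V X l}

def IsBP (V : Matrix (Fin n) (Fin p) ℝ → Submodule ℝ (E m))
    (X : Matrix (Fin n) (Fin p) ℝ) (i j : ℕ) : Prop :=
  1 ≤ i ∧ i ≤ n ∧ 1 ≤ j ∧ j ≤ p ∧
  (∀ k l, i ≤ k → k ≤ n → j ≤ l → l ≤ p → BreaksDownBlock V X k l) ∧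
  (∀ k l, 1 ≤ k → 1 ≤ l → k ≤ i → l ≤ j → (k, l) ≠ (i, j) → ¬ BreaksDownBlock V X k l)

/-- A full orthonormal system of left singular vectors of `Y` (eigenvectors of `Y Yᵀ`)
with singular values `σ` arranged in decreasing order. -/
def IsLeftSingularSystem {n p : ℕ} (Y : Matrix (Fin n) (Fin p) ℝ)
    (u : Fin n → E n) (σ : Fin n → ℝ) : Prop :=
  Orthonormal ℝ u ∧ (∀ i, 0 ≤ σ i) ∧ (∀ i j : Fin n, i ≤ j → σ j ≤ σ i) ∧
  ∀ i, Matrix.toEuclideanLin (Y * Yᵀ) (u i) = ((σ i) ^ 2) • u i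

/-- A full orthonormal system of right singular vectors of `Y` (eigenvectors of `Yᵀ Y`)
with singular values `σ` arranged in decreasing order. -/
def IsRightSingularSystem {n p : ℕ} (Y : Matrix (Fin n) (Fin p) ℝ)
    (v : Fin p → E p) (σ : Fin p → ℝ) : Prop :=
  Orthonormal ℝ v ∧ (∀ j, 0 ≤ σ j) ∧ (∀ i j : Fin p, i ≤ j → σ j ≤ σ i) ∧
  ∀ j, Matrix.toEuclideanLin (Yᵀ * Y) (v j) = ((σ j) ^ 2) • v j

/-- `S` is an `R`-dimensional subspace of `ℝⁿ` spanned by left singular vectors of `Y`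
corresponding to its `R` largest singular values. -/
def IsLeftSingularSubspace {n p : ℕ} (Y : Matrix (Fin n) (Fin p) ℝ) (R : ℕ)
    (S : Submodule ℝ (E n)) : Prop :=
  ∃ (u : Fin n → E n) (σ : Fin n → ℝ), IsLeftSingularSystem Y u σ ∧
    S = Submodule.span ℝ {x | ∃ i : Fin n, (i : ℕ) < R ∧ x = u i}

/-- `S` is an `R`-dimensional subspace of `ℝᵖ` spanned by right singular vectors of `Y`
corresponding to its `R` largest singular values. -/
def IsRightSingularSubspace {n p : ℕ} (Y : Matrix (Fin n) (Fin p) ℝ) (R : ℕ)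
    (S : Submodule ℝ (E p)) : Prop :=
  ∃ (v : Fin p → E p) (σ : Fin p → ℝ), IsRightSingularSystem Y v σ ∧
    S = Submodule.span ℝ {x | ∃ j : Fin p, (j : ℕ) < R ∧ x = v j}

/-! Pick `R + 1` rows and one column `j`. As `U_R(X)` has dimension `R`, some unit vector `a`
supported on these rows is orthogonal to `U_R(X)`; writing `t a` into the block gives a matrix
`B + t a e_jᵀ` with `B` independent of `t`. For large `t` its leading left singular vector, which
lies in `U_R(Z)`, is close to `± a` and hence almost orthogonal to `U_R(X)`. Since both subspaces
have dimension `R`, this forces the largest canonical angle towards `π / 2`. -/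

open scoped RealInnerProductSpace
open Module Real

section Geometry

variable {F : Type*} [NormedAddCommGroup F] [InnerProductSpace ℝ F]

lemma Submodule.exists_mem_orthogonal_ne_zero_of_finrank_lt {K S : Submodule ℝ F}
    [FiniteDimensional ℝ K] (h : finrank ℝ K < finrank ℝ S) : ∃ x ∈ S, x ∈ Kᗮ ∧ x ≠ 0 := by
  let Q : S →ₗ[ℝ] K := K.orthogonalProjectionOnto.toLinearMap ∘ₗ S.subtype
  have hQ : ¬ Function.Injective Q := fun hinj =>
    (LinearMap.finrank_le_finrank_of_injective hinj).not_gt h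
  obtain ⟨x, hxQ, hx0⟩ := Submodule.exists_mem_ne_zero_of_ne_bot
    (mt LinearMap.ker_eq_bot.1 hQ)
  exact ⟨x, x.2, Submodule.orthogonalProjectionOnto_eq_zero_iff.1 hxQ,
    fun h => hx0 (Subtype.ext h)⟩

lemma Submodule.exists_norm_starProjection_le {V W : Submodule ℝ F} [FiniteDimensional ℝ V]
    [FiniteDimensional ℝ W] (hVW : finrank ℝ V ≤ finrank ℝ W) {z : F} (hzV : z ∈ V)
    (hz : ‖z‖ = 1) : ∃ w ∈ W, ‖w‖ = 1 ∧ ‖V.starProjection w‖ ≤ ‖W.starProjection z‖ := by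
  suffices ∃ w ∈ W, w ≠ 0 ∧ ‖V.starProjection w‖ ≤ ‖W.starProjection z‖ * ‖w‖ by
    obtain ⟨w, hwW, hw0, hw⟩ := this
    have hpos : 0 < ‖w‖ := norm_pos_iff.2 hw0
    refine ⟨‖w‖⁻¹ • w, W.smul_mem _ hwW, norm_smul_inv_norm hw0, ?_⟩
    rw [map_smul, norm_smul, norm_inv, norm_norm, inv_mul_le_iff₀ hpos, mul_comm]
    exact hw
  let Q : W →ₗ[ℝ] V := V.orthogonalProjectionOnto.toLinearMap ∘ₗ W.subtype
  by_cases hQ : Function.Injective Q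
  · -- `Q` is then onto, and a preimage of `z` is the required vector
    have hrank := le_antisymm (LinearMap.finrank_le_finrank_of_injective hQ) hVW
    obtain ⟨w, hw⟩ := (LinearMap.injective_iff_surjective_of_finrank_eq_finrank hrank).1 hQ
      ⟨z, hzV⟩
    have hVw : V.starProjection w = z := congrArg Subtype.val hw
    refine ⟨w, w.2, fun h => by simp [← hVw, h] at hz, ?_⟩
    have hinner : ⟪(w : F), W.starProjection z⟫ = 1 := by
      rw [← W.inner_starProjection_left_eq_right, W.starProjection_eq_self_iff.2 w.2,
        ← V.starProjection_eq_self_iff.2 hzV, ← V.inner_starProjection_left_eq_right, hVw,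
        real_inner_self_eq_norm_sq, hz, one_pow]
    rw [hVw, hz, ← hinner, mul_comm]
    exact real_inner_le_norm _ _
  · obtain ⟨w, hwQ, hw0⟩ := Submodule.exists_mem_ne_zero_of_ne_bot (mt LinearMap.ker_eq_bot.1 hQ)
    refine ⟨w, w.2, fun h => hw0 (Subtype.ext h), ?_⟩
    have : V.starProjection w = 0 := by
      rw [Submodule.starProjection_apply]
      exact congrArg Subtype.val (LinearMap.mem_ker.1 hwQ)
    rw [this, norm_zero]
    positivity

lemma Submodule.norm_starProjection_sq_le_one_sub_inner_sq {W : Submodule ℝ F}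
    [W.HasOrthogonalProjection] {a z : F} (ha : ‖a‖ = 1) (haW : a ∈ Wᗮ) (hz : ‖z‖ = 1) :
    ‖W.starProjection z‖ ^ 2 ≤ 1 - ⟪a, z⟫ ^ 2 := by
  have hPa : W.starProjection a = 0 := by
    rw [Submodule.starProjection_apply, Submodule.orthogonalProjectionOnto_eq_zero_iff.2 haW,
      Submodule.coe_zero]
  calc ‖W.starProjection z‖ ^ 2 = ‖W.starProjection (z - ⟪a, z⟫ • a)‖ ^ 2 := by
        rw [map_sub, map_smul, hPa, smul_zero, sub_zero]
    _ ≤ ‖z - ⟪a, z⟫ • a‖ ^ 2 := by gcongr; exact W.norm_starProjection_apply_le _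
    _ = 1 - ⟪a, z⟫ ^ 2 := by
        rw [norm_sub_sq_real, real_inner_smul_right, norm_smul, real_inner_comm, hz, ha,
          Real.norm_eq_abs, mul_one, sq_abs]
        ring

end Geometry

lemma OrthonormalBasis.inner_self_apply_le {ι F : Type*} [Fintype ι] [NormedAddCommGroup F]
    [InnerProductSpace ℝ F] (b : OrthonormalBasis ι ℝ F) {T : F →ₗ[ℝ] F} (hT : T.IsSymmetric)
    {μ : ι → ℝ} (hTb : ∀ i, T (b i) = μ i • b i) {M : ℝ} (hM : ∀ i, μ i ≤ M) (x : F) :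
    ⟪x, T x⟫ ≤ M * ‖x‖ ^ 2 := by
  calc ⟪x, T x⟫ = ∑ i, μ i * ⟪x, b i⟫ ^ 2 := by
        rw [← b.sum_inner_mul_inner]
        refine Finset.sum_congr rfl fun i _ => ?_
        rw [← hT, hTb, real_inner_smul_left, real_inner_comm x]
        ring
    _ ≤ ∑ i, M * ⟪x, b i⟫ ^ 2 := by gcongr with i; exact hM i
    _ = M * ‖x‖ ^ 2 := by
        rw [← Finset.mul_sum, ← real_inner_self_eq_norm_sq, ← b.sum_inner_mul_inner]
        simp only [real_inner_comm x, sq]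

lemma sub_two_mul_le_mul_abs_inner {F G : Type*} [NormedAddCommGroup F] [InnerProductSpace ℝ F]
    [NormedAddCommGroup G] [InnerProductSpace ℝ G] {L M : F → G} {a z : F} {s : G} {t C : ℝ}
    (ha : ‖a‖ = 1) (hs : ‖s‖ = 1) (hz : ‖z‖ = 1) (ht : 0 ≤ t) (hL : ∀ x, ‖L x‖ ≤ C * ‖x‖)
    (hM : ∀ x, M x = L x + (t * ⟪a, x⟫) • s) (hmax : ‖M a‖ ≤ ‖M z‖) :
    t - 2 * C ≤ t * |⟪a, z⟫| := by
  have hMa : t - C ≤ ‖M a‖ := by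
    have h := norm_sub_norm_le ((t * ⟪a, a⟫) • s) (-L a)
    rw [sub_neg_eq_add, add_comm, ← hM, norm_neg, norm_smul, real_inner_self_eq_norm_sq, ha,
      hs, one_pow, mul_one, mul_one, Real.norm_eq_abs, abs_of_nonneg ht] at h
    linarith [show ‖L a‖ ≤ C by simpa [ha] using hL a]
  have hMz : ‖M z‖ ≤ C + t * |⟪a, z⟫| := by
    rw [hM]
    refine (norm_add_le _ _).trans (add_le_add ?_ ?_)
    · simpa [hz] using hL z
    · rw [norm_smul, hs, Real.norm_eq_abs, abs_mul, abs_of_nonneg ht, mul_one]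
  linarith

lemma canonAngle_eq_arccos_sInf {k : ℕ} (V W : Submodule ℝ (E k)) :
    canonAngle V W = arccos (sInf {r : ℝ | ∃ w ∈ W, ‖w‖ = 1 ∧ r = ‖V.starProjection w‖}) :=
  rfl

lemma canonAngle_le_pi_div_two {k : ℕ} (V W : Submodule ℝ (E k)) :
    canonAngle V W ≤ π / 2 :=
  arccos_le_pi_div_two.2 <| Real.sInf_nonneg fun _ ⟨_, _, _, hr⟩ => hr ▸ norm_nonneg _

lemma canonAngle_self {k : ℕ} {S : Submodule ℝ (E k)} (h : ∃ z ∈ S, ‖z‖ = 1) :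
    canonAngle S S = 0 := by
  obtain ⟨z, hzS, hz⟩ := h
  have hset : {r : ℝ | ∃ w ∈ S, ‖w‖ = 1 ∧ r = ‖S.starProjection w‖} = {1} := by
    ext r
    constructor
    · rintro ⟨w, hwS, hw, rfl⟩
      rw [S.starProjection_eq_self_iff.2 hwS, hw, Set.mem_singleton_iff]
    · rintro rfl
      exact ⟨z, hzS, hz, by rw [S.starProjection_eq_self_iff.2 hzS, hz]⟩
  rw [canonAngle_eq_arccos_sInf, hset, csInf_singleton, arccos_one]

lemma arccos_le_canonAngle {k : ℕ} {V W : Submodule ℝ (E k)}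
    (hVW : finrank ℝ V ≤ finrank ℝ W) {z : E k} (hzV : z ∈ V) (hz : ‖z‖ = 1) {ε : ℝ}
    (hε : ‖W.starProjection z‖ ≤ ε) : arccos ε ≤ canonAngle V W := by
  obtain ⟨w, hwW, hw, hVw⟩ := Submodule.exists_norm_starProjection_le hVW hzV hz
  have hbdd : BddBelow {r : ℝ | ∃ w ∈ W, ‖w‖ = 1 ∧ r = ‖V.starProjection w‖} :=
    ⟨0, fun _ ⟨_, _, _, hr⟩ => hr ▸ norm_nonneg _⟩
  exact arccos_le_arccos ((csInf_le hbdd ⟨w, hwW, hw, rfl⟩).trans (hVw.trans hε))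

lemma inner_toEuclideanLin_mul_transpose_self (Z : Matrix (Fin n) (Fin p) ℝ) (x : E n) :
    ⟪x, toEuclideanLin (Z * Zᵀ) x⟫ = ‖toEuclideanLin Zᵀ x‖ ^ 2 := by
  have hadj : toEuclideanLin Zᵀ = LinearMap.adjoint (toEuclideanLin Z) := by
    rw [← toEuclideanLin_conjTranspose_eq_adjoint, conjTranspose_eq_transpose_of_trivial]
  rw [show toEuclideanLin (Z * Zᵀ) = toEuclideanLin Z ∘ₗ toEuclideanLin Zᵀ from
    toLpLin_mul_same _ _ _, LinearMap.comp_apply, hadj, ← LinearMap.adjoint_inner_left,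
    real_inner_self_eq_norm_sq]

lemma IsLeftSingularSystem.norm_apply_le {Z : Matrix (Fin n) (Fin p) ℝ} {u : Fin n → E n}
    {σ : Fin n → ℝ} (h : IsLeftSingularSystem Z u σ) (hn : 0 < n) (x : E n) :
    ‖toEuclideanLin Zᵀ x‖ ≤ ‖toEuclideanLin Zᵀ (u ⟨0, hn⟩)‖ * ‖x‖ := by
  obtain ⟨hu, hσ, hanti, heig⟩ := h
  let b : OrthonormalBasis (Fin n) ℝ (E n) := OrthonormalBasis.mk hu
    (hu.linearIndependent.span_eq_top_of_card_eq_finrank' (by simp)).ge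
  have hsymm : (toEuclideanLin (Z * Zᵀ)).IsSymmetric := by
    rw [isSymmetric_toEuclideanLin_iff, ← conjTranspose_eq_transpose_of_trivial]
    exact isHermitian_mul_conjTranspose_self Z
  have htop : ‖toEuclideanLin Zᵀ (u ⟨0, hn⟩)‖ ^ 2 = σ ⟨0, hn⟩ ^ 2 := by
    rw [← inner_toEuclideanLin_mul_transpose_self, heig, real_inner_smul_right,
      real_inner_self_eq_norm_sq, hu.1, one_pow, mul_one]
  have hx : ‖toEuclideanLin Zᵀ x‖ ^ 2 ≤ σ ⟨0, hn⟩ ^ 2 * ‖x‖ ^ 2 := by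
    rw [← inner_toEuclideanLin_mul_transpose_self]
    refine b.inner_self_apply_le hsymm (μ := fun i => σ i ^ 2) (fun i => ?_) (fun i => ?_) x
    · simpa [b] using heig i
    · exact pow_le_pow_left₀ (hσ i) (hanti _ _ (Fin.mk_le_of_le_val i.val.zero_le)) 2
  rw [← htop, ← mul_pow] at hx
  exact pow_le_pow_iff_left₀ (norm_nonneg _) (by positivity) two_ne_zero |>.1 hx

lemma toEuclideanLin_transpose_add_smul_vecMulVec (B : Matrix (Fin n) (Fin p) ℝ) (t : ℝ)
    (a : E n) (s : E p) (x : E n) :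
    toEuclideanLin (B + t • vecMulVec a.ofLp s.ofLp)ᵀ x
      = toEuclideanLin Bᵀ x + (t * ⟪a, x⟫) • s := by
  ext j
  simp [transpose_vecMulVec, vecMulVec_mulVec,
    EuclideanSpace.inner_eq_star_dotProduct, dotProduct_comm]
  ring

lemma exists_unit_mem_orthogonal_supported {K : Submodule ℝ (E n)} {I : Finset (Fin n)}
    (h : finrank ℝ K < I.card) : ∃ a : E n, ‖a‖ = 1 ∧ a ∈ Kᗮ ∧ ∀ i ∉ I, a i = 0 := by
  let e : I → E n := fun i => EuclideanSpace.single (i : Fin n) 1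
  have he : LinearIndependent ℝ e := by
    simpa [e, Function.comp_def] using
      (EuclideanSpace.basisFun (Fin n) ℝ).toBasis.linearIndependent.comp _ Subtype.val_injective
  obtain ⟨x, hxS, hxK, hx0⟩ := Submodule.exists_mem_orthogonal_ne_zero_of_finrank_lt
    (K := K) (S := Submodule.span ℝ (Set.range e))
    (by rwa [finrank_span_eq_card he, Fintype.card_coe])
  refine ⟨‖x‖⁻¹ • x, norm_smul_inv_norm hx0, Kᗮ.smul_mem _ hxK, fun i hi => ?_⟩
  obtain ⟨c, rfl⟩ := (Submodule.mem_span_range_iff_exists_fun ℝ).1 hxS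
  rw [PiLp.smul_apply, smul_eq_mul, WithLp.ofLp_sum, Finset.sum_apply]
  refine mul_eq_zero_of_right _ (Finset.sum_eq_zero fun j _ => ?_)
  simp only [e, EuclideanSpace.single, WithLp.ofLp_smul, PiLp.ofLp_single, Pi.smul_apply,
    smul_eq_mul]
  rw [Pi.single_eq_of_ne (fun h : i = j => hi (h ▸ j.2)), mul_zero]

lemma blockCorrupt_updateCol_add_smul_vecMulVec (X : Matrix (Fin n) (Fin p) ℝ)
    {I : Finset (Fin n)} {a : E n} (ha : ∀ i ∉ I, a i = 0) (j₀ : Fin p) (t : ℝ) :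
    BlockCorrupt X (X.updateCol j₀ (fun i => if i ∈ I then 0 else X i j₀)
      + t • vecMulVec a.ofLp (EuclideanSpace.single j₀ (1 : ℝ)).ofLp) I.card 1 := by
  refine ⟨I, {j₀}, rfl, Finset.card_singleton j₀, fun i j hij => ?_⟩
  by_cases hj : j = j₀
  · subst hj
    have hi : i ∉ I := by simpa using hij
    simp [updateCol_self, vecMulVec_apply, hi, ha i hi]
  · simp [vecMulVec_apply, hj]

lemma IsLeftSingularSubspace.finrank_eq {Y : Matrix (Fin n) (Fin p) ℝ} {R : ℕ}
    {S : Submodule ℝ (E n)} (hS : IsLeftSingularSubspace Y R S) (hRn : R ≤ n) :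
    finrank ℝ S = R := by
  obtain ⟨u, σ, hsys, rfl⟩ := hS
  have hrange : {x : E n | ∃ i : Fin n, (i : ℕ) < R ∧ x = u i}
      = Set.range (u ∘ Fin.castLE hRn) := by
    ext x
    constructor
    · rintro ⟨i, hi, rfl⟩
      exact ⟨⟨i, hi⟩, rfl⟩
    · rintro ⟨j, rfl⟩
      exact ⟨Fin.castLE hRn j, j.2, rfl⟩
  rw [hrange, finrank_span_eq_card (hsys.1.linearIndependent.comp _ (Fin.castLE_injective hRn)),
    Fintype.card_fin]

lemma IsLeftSingularSubspace.exists_top_singular_vector {Y : Matrix (Fin n) (Fin p) ℝ}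
    {R : ℕ} {S : Submodule ℝ (E n)} (hS : IsLeftSingularSubspace Y R S) (hR1 : 1 ≤ R)
    (hn : 0 < n) :
    ∃ z ∈ S, ‖z‖ = 1 ∧ ∀ x, ‖toEuclideanLin Yᵀ x‖ ≤ ‖toEuclideanLin Yᵀ z‖ * ‖x‖ := by
  obtain ⟨u, σ, hsys, rfl⟩ := hS
  exact ⟨u ⟨0, hn⟩, Submodule.subset_span ⟨⟨0, hn⟩, hR1, rfl⟩, hsys.1.1 _,
    hsys.norm_apply_le hn⟩

lemma IsLeftSingularSubspace.exists_unit_inner_sq_ge {B : Matrix (Fin n) (Fin p) ℝ}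
    {a : E n} {s : E p} {t C : ℝ} (ha : ‖a‖ = 1) (hs : ‖s‖ = 1) (ht : 0 < t)
    (hC : ∀ x, ‖toEuclideanLin Bᵀ x‖ ≤ C * ‖x‖) {R : ℕ} (hR1 : 1 ≤ R) {S : Submodule ℝ (E n)}
    (hS : IsLeftSingularSubspace (B + t • vecMulVec a.ofLp s.ofLp) R S) :
    ∃ z ∈ S, ‖z‖ = 1 ∧ 1 - 4 * C / t ≤ ⟪a, z⟫ ^ 2 := by
  have hn : 0 < n := Nat.pos_of_ne_zero fun h => by
    subst h
    simp [Subsingleton.elim a 0] at ha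
  obtain ⟨z, hzS, hz, hmax⟩ := hS.exists_top_singular_vector hR1 hn
  have hspike := sub_two_mul_le_mul_abs_inner ha hs hz ht.le hC
    (toEuclideanLin_transpose_add_smul_vecMulVec B t a s) (by simpa [ha] using hmax a)
  have hle1 : |⟪a, z⟫| ≤ 1 := by simpa [ha, hz] using abs_real_inner_le_norm a z
  refine ⟨z, hzS, hz, ?_⟩
  have hC0 : 0 ≤ C := by simpa [ha] using (norm_nonneg _).trans (hC a)
  have h : 1 - |⟪a, z⟫| ^ 2 ≤ 4 * C / t := by
    rw [le_div_iff₀ ht]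
    nlinarith [mul_nonneg hC0 (sub_nonneg.2 hle1), abs_nonneg ⟪a, z⟫]
  rw [← sq_abs]
  linarith

lemma exists_blockCorrupt_arccos_le_canonAngle {R : ℕ} (hR1 : 1 ≤ R) (hRp : R ≤ p)
    (hRn : R < n) {U : Matrix (Fin n) (Fin p) ℝ → Submodule ℝ (E n)}
    (hU : ∀ Y, IsLeftSingularSubspace Y R (U Y)) (X : Matrix (Fin n) (Fin p) ℝ) {ε : ℝ}
    (hε : 0 < ε) : ∃ Z, BlockCorrupt X Z (R + 1) 1 ∧ arccos ε ≤ canonAngle (U Z) (U X) := by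
  obtain ⟨I, -, hI⟩ := Finset.exists_subset_card_eq (s := (Finset.univ : Finset (Fin n)))
    (n := R + 1) (by simpa using hRn)
  obtain ⟨a, ha, haU, haI⟩ := exists_unit_mem_orthogonal_supported (K := U X) (I := I)
    (by rw [(hU X).finrank_eq hRn.le, hI]; omega)
  let j₀ : Fin p := ⟨0, hR1.trans hRp⟩
  let B := X.updateCol j₀ (fun i => if i ∈ I then 0 else X i j₀)
  obtain ⟨C, hC0, hC⟩ := (LinearMap.toContinuousLinearMap (toEuclideanLin Bᵀ)).bound
  let t := 4 * C / ε ^ 2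
  let Z := B + t • vecMulVec a.ofLp (EuclideanSpace.single j₀ (1 : ℝ)).ofLp
  obtain ⟨z, hzU, hz, haz⟩ := (hU Z).exists_unit_inner_sq_ge ha (by simp) (by positivity) hC hR1
  refine ⟨Z, hI ▸ blockCorrupt_updateCol_add_smul_vecMulVec X haI j₀ t,
    arccos_le_canonAngle (by rw [(hU Z).finrank_eq hRn.le, (hU X).finrank_eq hRn.le]) hzU hz ?_⟩
  have hproj := (U X).norm_starProjection_sq_le_one_sub_inner_sq ha haU hz
  have ht : 4 * C / t = ε ^ 2 := by simp only [t]; field_simp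
  rw [ht] at haz
  exact (pow_le_pow_iff_left₀ (norm_nonneg _) hε.le two_ne_zero).1 (by linarith)

lemma sSup_eq_pi_div_two_of_forall_arccos_le {S : Set ℝ} (hS : ∀ d ∈ S, d ≤ π / 2)
    (h : ∀ ε > 0, ∃ d ∈ S, arccos ε ≤ d) : sSup S = π / 2 := by
  obtain ⟨d, hdS, -⟩ := h 1 one_pos
  refine csSup_eq_of_forall_le_of_forall_lt_exists_gt ⟨d, hdS⟩ hS fun w hw => ?_
  obtain ⟨hw'0, hw'⟩ : 0 ≤ max w 0 ∧ max w 0 < π / 2 :=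
    ⟨le_max_right w 0, max_lt hw (by positivity)⟩
  have hcos : 0 < cos (max w 0) := cos_pos_of_mem_Ioo ⟨by linarith, hw'⟩
  obtain ⟨d, hdS, hd⟩ := h (cos (max w 0) / 2) (by positivity)
  refine ⟨d, hdS, lt_of_le_of_lt (le_max_left w 0) (lt_of_lt_of_le ?_ hd)⟩
  calc max w 0 = arccos (cos (max w 0)) := (arccos_cos hw'0 (by linarith [pi_pos])).symm
    _ < arccos (cos (max w 0) / 2) :=
        strictAntiOn_arccos ⟨by linarith, by linarith [cos_le_one (max w 0)]⟩
          ⟨by linarith, cos_le_one _⟩ (by linarith)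

lemma breaksDownBlock_succ_one {R : ℕ} (hR1 : 1 ≤ R) (hRp : R ≤ p) (hRn : R < n)
    {U : Matrix (Fin n) (Fin p) ℝ → Submodule ℝ (E n)}
    (hU : ∀ Y, IsLeftSingularSubspace Y R (U Y)) (X : Matrix (Fin n) (Fin p) ℝ) :
    BreaksDownBlock U X (R + 1) 1 :=
  sSup_eq_pi_div_two_of_forall_arccos_le (fun _ ⟨_, _, hd⟩ => hd ▸ canonAngle_le_pi_div_two _ _)
    fun _ hε =>
      let ⟨Z, hZ, hle⟩ := exists_blockCorrupt_arccos_le_canonAngle hR1 hRp hRn hU X hε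
      ⟨_, ⟨Z, hZ, rfl⟩, hle⟩

section Breakdown

variable {V : Matrix (Fin n) (Fin p) ℝ → Submodule ℝ (E m)} {X : Matrix (Fin n) (Fin p) ℝ}

lemma sSup_canonAngle_eq_pi_div_two_of_imp {P Q : Matrix (Fin n) (Fin p) ℝ → Prop}
    (hPQ : ∀ Z, P Z → Q Z) (h : sSup {d | ∃ Z, P Z ∧ d = canonAngle (V Z) (V X)} = π / 2) :
    sSup {d | ∃ Z, Q Z ∧ d = canonAngle (V Z) (V X)} = π / 2 := by
  have hle : ∀ d ∈ {d | ∃ Z, Q Z ∧ d = canonAngle (V Z) (V X)}, d ≤ π / 2 :=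
    fun _ ⟨_, _, hd⟩ => hd ▸ canonAngle_le_pi_div_two _ _
  have hsub : {d | ∃ Z, P Z ∧ d = canonAngle (V Z) (V X)}
      ⊆ {d | ∃ Z, Q Z ∧ d = canonAngle (V Z) (V X)} :=
    fun _ ⟨Z, hZ, hd⟩ => ⟨Z, hPQ Z hZ, hd⟩
  have hne : {d | ∃ Z, P Z ∧ d = canonAngle (V Z) (V X)}.Nonempty :=
    Set.nonempty_iff_ne_empty.2 fun he => by
      rw [he, Real.sSup_empty] at h
      linarith [pi_pos]
  exact le_antisymm (csSup_le (hne.mono hsub) hle)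
    (h ▸ csSup_le_csSup ⟨π / 2, hle⟩ hne hsub)

lemma BlockCorrupt.mono {Z : Matrix (Fin n) (Fin p) ℝ} {k l k' l' : ℕ}
    (h : BlockCorrupt X Z k l) (hk : k ≤ k') (hk' : k' ≤ n) (hl : l ≤ l') (hl' : l' ≤ p) :
    BlockCorrupt X Z k' l' := by
  obtain ⟨I, J, rfl, rfl, hZ⟩ := h
  obtain ⟨I', hII', hI'⟩ := Finset.exists_superset_card_eq hk (by simpa using hk')
  obtain ⟨J', hJJ', hJ'⟩ := Finset.exists_superset_card_eq hl (by simpa using hl')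
  exact ⟨I', J', hI', hJ', fun i j hij => hZ i j (hij.imp (mt (@hII' i)) (mt (@hJJ' j)))⟩

lemma BreaksDownBlock.mono {k l k' l' : ℕ} (h : BreaksDownBlock V X k l) (hk : k ≤ k')
    (hk' : k' ≤ n) (hl : l ≤ l') (hl' : l' ≤ p) : BreaksDownBlock V X k' l' :=
  sSup_canonAngle_eq_pi_div_two_of_imp (fun _ hZ => hZ.mono hk hk' hl hl') h

lemma BreaksDownBlock.breaksDownRow {k l : ℕ} (h : BreaksDownBlock V X k l) :
    BreaksDownRow V X k :=
  sSup_canonAngle_eq_pi_div_two_of_imp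
    (fun _ ⟨I, _, hI, _, hZ⟩ => ⟨I, hI, fun i hi j => hZ i j (Or.inl hi)⟩) h

lemma BreaksDownBlock.breaksDownCol {k l : ℕ} (h : BreaksDownBlock V X k l) :
    BreaksDownCol V X l :=
  sSup_canonAngle_eq_pi_div_two_of_imp
    (fun _ ⟨_, J, _, hJ, hZ⟩ => ⟨J, hJ, fun j hj i => hZ i j (Or.inr hj)⟩) h

lemma not_breaksDownBlock_zero_left (hV : ∃ z ∈ V X, ‖z‖ = 1) (l : ℕ) :
    ¬ BreaksDownBlock V X 0 l := by
  intro h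
  have hle : sSup {d | ∃ Z, BlockCorrupt X Z 0 l ∧ d = canonAngle (V Z) (V X)} ≤ 0 := by
    refine Real.sSup_nonpos fun _ ⟨Z, ⟨I, J, hI, _, hZ⟩, hd⟩ => ?_
    have : Z = X := by
      ext i j
      exact hZ i j (Or.inl (by simp [Finset.card_eq_zero.1 hI]))
    rw [hd, this, canonAngle_self hV]
  rw [h] at hle
  linarith [pi_pos]

end Breakdown

/-- for the left singular subspace function `U_R` of the standard SVD
(any fixed selection), there is `k ≤ R+1` with `(k,1) ∈ BP(U_R;X)`; in particular
`bp_row(U_R;X) ≤ R+1` and `bp_col(U_R;X) = 1`. -/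
theorem stmt4 {n p : ℕ} (R : ℕ) (hR1 : 1 ≤ R) (hRmin : R ≤ min n p) (hRn : R < n)
    (U : Matrix (Fin n) (Fin p) ℝ → Submodule ℝ (E n))
    (hU : ∀ Y, IsLeftSingularSubspace Y R (U Y))
    (X : Matrix (Fin n) (Fin p) ℝ) :
    (∃ k ≤ R + 1, IsBP U X k 1) ∧
    bpRow U X ≤ R + 1 ∧ bpCol U X = 1 := by
  classical
  have hRp : R ≤ p := hRmin.trans (min_le_right n p)
  have hbreak : BreaksDownBlock U X (R + 1) 1 := breaksDownBlock_succ_one hR1 hRp hRn hU X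
  have hex : ∃ k, BreaksDownBlock U X k 1 := ⟨R + 1, hbreak⟩
  have hk_le : Nat.find hex ≤ R + 1 := Nat.find_min' hex hbreak
  have hunit : ∃ z ∈ U X, ‖z‖ = 1 :=
    let ⟨z, hzU, hz, _⟩ := (hU X).exists_top_singular_vector hR1 (by omega)
    ⟨z, hzU, hz⟩
  have hk_pos : Nat.find hex ≠ 0 := fun h0 =>
    not_breaksDownBlock_zero_left hunit 1 (h0 ▸ Nat.find_spec hex)
  refine ⟨⟨Nat.find hex, hk_le, by omega, by omega, le_rfl, by omega,
    fun k l hk hkn hl hlp => (Nat.find_spec hex).mono hk hkn hl hlp, ?_⟩,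
    Nat.sInf_le ⟨by omega, hRn, hbreak.breaksDownRow⟩,
    le_antisymm (Nat.sInf_le ⟨le_rfl, by omega, hbreak.breaksDownCol⟩)
      (le_csInf ⟨1, le_rfl, by omega, hbreak.breaksDownCol⟩ fun _ hl => hl.1)⟩
  intro k l _ hl hk hl1 hne
  obtain rfl : l = 1 := by omega
  exact Nat.find_min hex (lt_of_le_of_ne hk fun h => hne (by rw [h]))
end
end

section
/- Let X = (x_{ij}) be an n×p real matrix, u = (u₁,…,u_n)ᵀ ∈ ℝⁿ, v = (v₁,…,v_p)ᵀ ∈ ℝᵖ, and d ∈ ℝ. Then ‖X − d·u·vᵀ‖_{F1} = Σ_{(i,j): u_i v_j ≠ 0} |u_i v_j|·|x_{ij}/(u_i v_j) − d| + Σ_{(i,j): u_i v_j = 0} |x_{ij}|. Consequently, minimizing d ↦ ‖X − d·u·vᵀ‖_{F1} over d ∈ ℝ is equivalent to minimizing the weighted-median objective d ↦ Σ_{(i,j): u_i ≠ 0, v_j ≠ 0} |u_i v_j|·|x_{ij}/(u_i v_j) − d|: both functions have the same set of minimizers. -/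
noncomputable section
open scoped BigOperators Classical
open Matrix

/-- Element-wise 1-norm `‖A‖_{F1} = Σ_{i,j} |a_{ij}|`. -/
noncomputable def f1norm {n p : ℕ} (M : Matrix (Fin n) (Fin p) ℝ) : ℝ :=
  ∑ i, ∑ j, |M i j|

/-- The rank-one matrix `u vᵀ`. -/
def outer {n p : ℕ} (u : Fin n → ℝ) (v : Fin p → ℝ) : Matrix (Fin n) (Fin p) ℝ :=
  Matrix.of fun i j => u i * v j

lemma stmt15_key {n p : ℕ} (X : Matrix (Fin n) (Fin p) ℝ)
    (u : Fin n → ℝ) (v : Fin p → ℝ) (d : ℝ) :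
    f1norm (X - d • outer u v) =
      (∑ q ∈ Finset.univ.filter (fun q : Fin n × Fin p => u q.1 * v q.2 ≠ 0),
        |u q.1 * v q.2| * |X q.1 q.2 / (u q.1 * v q.2) - d|) +
      ∑ q ∈ Finset.univ.filter (fun q : Fin n × Fin p => u q.1 * v q.2 = 0),
        |X q.1 q.2| := by
  have h : f1norm (X - d • outer u v) =
      ∑ q : Fin n × Fin p, |X q.1 q.2 - d * (u q.1 * v q.2)| := by
    rw [f1norm]
    simp only [Fintype.sum_prod_type]
    refine Finset.sum_congr rfl fun i _ => Finset.sum_congr rfl fun j _ => ?_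
    simp [outer, Matrix.sub_apply, Matrix.smul_apply, mul_comm]
  rw [h, ← Finset.sum_filter_add_sum_filter_not Finset.univ
      (fun q : Fin n × Fin p => u q.1 * v q.2 ≠ 0)]
  congr 1
  · refine Finset.sum_congr rfl fun q hq => ?_
    have hne : u q.1 * v q.2 ≠ 0 := (Finset.mem_filter.mp hq).2
    rw [← abs_mul, mul_sub, mul_div_cancel₀ _ hne, mul_comm d]
  · refine Finset.sum_congr (by ext q; simp [or_iff_not_imp_left]) fun q hq => ?_
    have h0 : u q.1 * v q.2 = 0 := by
      have := (Finset.mem_filter.mp hq).2; simpa using this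
    rw [h0, mul_zero, sub_zero]

/-- `‖X - d·u·vᵀ‖_{F1}` splits as the weighted-median objective over entries
with `uᵢvⱼ ≠ 0` plus the constant `Σ_{uᵢvⱼ = 0} |xᵢⱼ|`; consequently, minimizing
`d ↦ ‖X - d·u·vᵀ‖_{F1}` over `d ∈ ℝ` has the same set of minimizers as the weighted-median
objective `d ↦ Σ_{uᵢ ≠ 0, vⱼ ≠ 0} |uᵢvⱼ|·|xᵢⱼ/(uᵢvⱼ) - d|`. -/
theorem stmt15 {n p : ℕ} (X : Matrix (Fin n) (Fin p) ℝ)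
    (u : Fin n → ℝ) (v : Fin p → ℝ) (d : ℝ) :
    (f1norm (X - d • outer u v) =
      (∑ q ∈ Finset.univ.filter (fun q : Fin n × Fin p => u q.1 * v q.2 ≠ 0),
        |u q.1 * v q.2| * |X q.1 q.2 / (u q.1 * v q.2) - d|) +
      ∑ q ∈ Finset.univ.filter (fun q : Fin n × Fin p => u q.1 * v q.2 = 0),
        |X q.1 q.2|) ∧
    {d0 : ℝ | ∀ d' : ℝ, f1norm (X - d0 • outer u v) ≤ f1norm (X - d' • outer u v)} =
    {d0 : ℝ | ∀ d' : ℝ,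
      (∑ q ∈ Finset.univ.filter (fun q : Fin n × Fin p => u q.1 ≠ 0 ∧ v q.2 ≠ 0),
        |u q.1 * v q.2| * |X q.1 q.2 / (u q.1 * v q.2) - d0|) ≤
      ∑ q ∈ Finset.univ.filter (fun q : Fin n × Fin p => u q.1 ≠ 0 ∧ v q.2 ≠ 0),
        |u q.1 * v q.2| * |X q.1 q.2 / (u q.1 * v q.2) - d'|} := by
  have hfilter : (Finset.univ.filter (fun q : Fin n × Fin p => u q.1 ≠ 0 ∧ v q.2 ≠ 0)) =
      Finset.univ.filter (fun q : Fin n × Fin p => u q.1 * v q.2 ≠ 0) := by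
    ext q; simp [mul_ne_zero_iff]
  refine ⟨stmt15_key X u v d, ?_⟩
  ext d0
  simp only [Set.mem_setOf_eq, hfilter]
  constructor
  · intro h d'
    have := h d'
    rw [stmt15_key X u v d0, stmt15_key X u v d'] at this
    linarith
  · intro h d'
    rw [stmt15_key X u v d0, stmt15_key X u v d']
    linarith [h d']
end
end
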